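/- arXiv:1610.03965 — 11 statements merged into one kernel-verified Lean document; each statement's English description precedes it below -/
import Mathlib

section
/- The equation z^3 = -2i·z + (5/4)·conj(z) has exactly 7 solutions in the complex plane, namely 0, ±(√3/2)·e^{-iπ/4}, and (±(3√2/4) ± i(√2/4))·e^{-iπ/4} (all four sign combinations). -/
set_option maxHeartbeats 1000000

open Complex

private lemma hsat (a b : ℝ)
    (h1 : a^3 - 3*a*b^2 = 5/4*a + 2*b)
    (h2 : 3*a^2*b - b^3 = -2*a - 5/4*b) :
    ((a:ℂ) + (b:ℂ)*I) ^ 3 = -2 * I * ((a:ℂ)+(b:ℂ)*I) + (5/4) * (starRingEnd ℂ) ((a:ℂ)+(b:ℂ)*I) := by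
  have hc : (starRingEnd ℂ) ((a:ℂ)+(b:ℂ)*I) = (a:ℂ) - (b:ℂ)*I := by
    simp [map_add, map_mul, Complex.conj_ofReal, Complex.conj_I]; ring
  rw [hc]
  simp [Complex.ext_iff, pow_succ, Complex.mul_re, Complex.mul_im]
  constructor
  · linear_combination h1
  · linear_combination h2

/-- The equation `z³ = -2i·z + (5/4)·conj z` has exactly 7 solutions:
`0`, `±(√3/2)·e^{-iπ/4}`, and `(±(3√2/4) ± i(√2/4))·e^{-iπ/4}`,
where `e^{-iπ/4} = (1-i)/√2`. -/
theorem cubic_eq_seven_solutions :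
    {z : ℂ | z ^ 3 = -2 * Complex.I * z + (5 / 4) * (starRingEnd ℂ) z} =
      ({0,
        ((Real.sqrt 3 : ℂ) / 2) * ((1 - Complex.I) / (Real.sqrt 2 : ℂ)),
        -(((Real.sqrt 3 : ℂ) / 2) * ((1 - Complex.I) / (Real.sqrt 2 : ℂ))),
        ((3 * (Real.sqrt 2 : ℂ) / 4) + Complex.I * ((Real.sqrt 2 : ℂ) / 4)) *
          ((1 - Complex.I) / (Real.sqrt 2 : ℂ)),
        ((3 * (Real.sqrt 2 : ℂ) / 4) - Complex.I * ((Real.sqrt 2 : ℂ) / 4)) *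
          ((1 - Complex.I) / (Real.sqrt 2 : ℂ)),
        (-(3 * (Real.sqrt 2 : ℂ) / 4) + Complex.I * ((Real.sqrt 2 : ℂ) / 4)) *
          ((1 - Complex.I) / (Real.sqrt 2 : ℂ)),
        (-(3 * (Real.sqrt 2 : ℂ) / 4) - Complex.I * ((Real.sqrt 2 : ℂ) / 4)) *
          ((1 - Complex.I) / (Real.sqrt 2 : ℂ))} : Set ℂ) ∧
    {z : ℂ | z ^ 3 = -2 * Complex.I * z + (5 / 4) * (starRingEnd ℂ) z}.ncard = 7 := by
  have hs0 : ((Real.sqrt 2 : ℝ) : ℂ) ≠ 0 := by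
    simp [Real.sqrt_ne_zero'.mpr]
  set r : ℝ := Real.sqrt 3 / (2 * Real.sqrt 2) with hrdef
  have hr : r ^ 2 = 3/8 := by
    rw [hrdef, div_pow, mul_pow, Real.sq_sqrt (by norm_num : (3:ℝ) ≥ 0),
      Real.sq_sqrt (by norm_num : (2:ℝ) ≥ 0)]
    norm_num
  have hr0 : 0 < r := by
    rw [hrdef]
    positivity
  have E0 : ((Real.sqrt 3 : ℂ) / 2) * ((1 - Complex.I) / (Real.sqrt 2 : ℂ))
      = ((r:ℝ):ℂ) + ((-r:ℝ):ℂ)*I := by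
    rw [hrdef]
    simp only [Complex.ext_iff, Complex.div_ofReal_re, Complex.div_ofReal_im,
      Complex.mul_re, Complex.mul_im, Complex.add_re, Complex.add_im, Complex.sub_re,
      Complex.sub_im, Complex.one_re, Complex.one_im, Complex.I_re, Complex.I_im,
      Complex.ofReal_re, Complex.ofReal_im, Complex.neg_re, Complex.neg_im]
    norm_num
    constructor <;> field_simp <;> ring
  have E0' : -(((Real.sqrt 3 : ℂ) / 2) * ((1 - Complex.I) / (Real.sqrt 2 : ℂ)))
      = ((-r:ℝ):ℂ) + ((r:ℝ):ℂ)*I := by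
    rw [E0]; push_cast; ring
  have E1 : ((3 * (Real.sqrt 2 : ℂ) / 4) + Complex.I * ((Real.sqrt 2 : ℂ) / 4)) *
          ((1 - Complex.I) / (Real.sqrt 2 : ℂ)) = ((1:ℝ):ℂ) + ((-1/2:ℝ):ℂ)*I := by
    simp only [Complex.ext_iff, Complex.div_ofReal_re, Complex.div_ofReal_im,
      Complex.mul_re, Complex.mul_im, Complex.add_re, Complex.add_im, Complex.sub_re,
      Complex.sub_im, Complex.one_re, Complex.one_im, Complex.I_re, Complex.I_im,
      Complex.ofReal_re, Complex.ofReal_im, Complex.neg_re, Complex.neg_im]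
    norm_num
    constructor <;> field_simp <;> ring
  have E2 : ((3 * (Real.sqrt 2 : ℂ) / 4) - Complex.I * ((Real.sqrt 2 : ℂ) / 4)) *
          ((1 - Complex.I) / (Real.sqrt 2 : ℂ)) = ((1/2:ℝ):ℂ) + ((-1:ℝ):ℂ)*I := by
    simp only [Complex.ext_iff, Complex.div_ofReal_re, Complex.div_ofReal_im,
      Complex.mul_re, Complex.mul_im, Complex.add_re, Complex.add_im, Complex.sub_re,
      Complex.sub_im, Complex.one_re, Complex.one_im, Complex.I_re, Complex.I_im,
      Complex.ofReal_re, Complex.ofReal_im, Complex.neg_re, Complex.neg_im]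
    norm_num
    constructor <;> field_simp <;> ring
  have E3 : ((-(3 * (Real.sqrt 2 : ℂ) / 4)) + Complex.I * ((Real.sqrt 2 : ℂ) / 4)) *
          ((1 - Complex.I) / (Real.sqrt 2 : ℂ)) = ((-1/2:ℝ):ℂ) + ((1:ℝ):ℂ)*I := by
    simp only [Complex.ext_iff, Complex.div_ofReal_re, Complex.div_ofReal_im,
      Complex.mul_re, Complex.mul_im, Complex.add_re, Complex.add_im, Complex.sub_re,
      Complex.sub_im, Complex.one_re, Complex.one_im, Complex.I_re, Complex.I_im,
      Complex.ofReal_re, Complex.ofReal_im, Complex.neg_re, Complex.neg_im]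
    norm_num
    constructor <;> field_simp <;> ring
  have E4 : ((-(3 * (Real.sqrt 2 : ℂ) / 4)) - Complex.I * ((Real.sqrt 2 : ℂ) / 4)) *
          ((1 - Complex.I) / (Real.sqrt 2 : ℂ)) = ((-1:ℝ):ℂ) + ((1/2:ℝ):ℂ)*I := by
    simp only [Complex.ext_iff, Complex.div_ofReal_re, Complex.div_ofReal_im,
      Complex.mul_re, Complex.mul_im, Complex.add_re, Complex.add_im, Complex.sub_re,
      Complex.sub_im, Complex.one_re, Complex.one_im, Complex.I_re, Complex.I_im,
      Complex.ofReal_re, Complex.ofReal_im, Complex.neg_re, Complex.neg_im]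
    norm_num
    constructor <;> field_simp <;> ring
  have hset : {z : ℂ | z ^ 3 = -2 * Complex.I * z + (5 / 4) * (starRingEnd ℂ) z} =
      ({0,
        ((Real.sqrt 3 : ℂ) / 2) * ((1 - Complex.I) / (Real.sqrt 2 : ℂ)),
        -(((Real.sqrt 3 : ℂ) / 2) * ((1 - Complex.I) / (Real.sqrt 2 : ℂ))),
        ((3 * (Real.sqrt 2 : ℂ) / 4) + Complex.I * ((Real.sqrt 2 : ℂ) / 4)) *
          ((1 - Complex.I) / (Real.sqrt 2 : ℂ)),
        ((3 * (Real.sqrt 2 : ℂ) / 4) - Complex.I * ((Real.sqrt 2 : ℂ) / 4)) *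
          ((1 - Complex.I) / (Real.sqrt 2 : ℂ)),
        (-(3 * (Real.sqrt 2 : ℂ) / 4) + Complex.I * ((Real.sqrt 2 : ℂ) / 4)) *
          ((1 - Complex.I) / (Real.sqrt 2 : ℂ)),
        (-(3 * (Real.sqrt 2 : ℂ) / 4) - Complex.I * ((Real.sqrt 2 : ℂ) / 4)) *
          ((1 - Complex.I) / (Real.sqrt 2 : ℂ))} : Set ℂ) := by
    ext z
    simp only [Set.mem_setOf_eq, Set.mem_insert_iff, Set.mem_singleton_iff]
    rw [E0', E0, E1, E2, E3, E4]
    constructor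
    · intro h
      set x := z.re with hx
      set y := z.im with hy
      have hz : z = (x:ℂ) + (y:ℂ)*I := by rw [hx, hy, Complex.re_add_im]
      have h1 := congrArg Complex.re h
      have h2 := congrArg Complex.im h
      simp [pow_succ, Complex.mul_re, Complex.mul_im, Complex.conj_re, Complex.conj_im]
        at h1 h2
      ring_nf at h1 h2
      have e1 : (x-y)*((x-y)^2 - 3*(x+y)^2 - 3/2) = 0 := by
        linear_combination (-2)*h1 + (-2)*h2
      have e2 : (x+y)*(3*(x-y)^2 - (x+y)^2 - 13/2) = 0 := by
        linear_combination 2*h1 - 2*h2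
      rcases mul_eq_zero.mp e1 with f1 | f1 <;> rcases mul_eq_zero.mp e2 with f2 | f2
      · -- x = y, x = -y → z = 0
        left
        have hx0 : x = 0 := by linarith
        have hy0 : y = 0 := by linarith
        rw [hz, hx0, hy0]; norm_num
      · exfalso; nlinarith [sq_nonneg (x+y), sq_nonneg (x-y)]
      · -- y = -x, (2x)^2 = 3/2
        have hx2 : x ^ 2 = 3/8 := by linear_combination (1/4)*f1 + ((3*x+y)/2)*f2
        have : (x - r) * (x + r) = 0 := by linear_combination hx2 - hr
        rcases mul_eq_zero.mp this with hxr | hxr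
        · right; left
          have hx' : x = r := by linarith
          have hy' : y = -r := by linarith
          rw [hz, hx', hy']
        · right; right; left
          have hx' : x = -r := by linarith
          have hy' : y = r := by linarith
          rw [hz, hx', hy']
      · -- both quadratic factors vanish
        have hA : (x - y)^2 = 9/4 := by linarith
        have hB : (x + y)^2 = 1/4 := by linarith
        have hA' : (x - y - 3/2) * (x - y + 3/2) = 0 := by linear_combination hA
        have hB' : (x + y - 1/2) * (x + y + 1/2) = 0 := by linear_combination hB
        rcases mul_eq_zero.mp hA' with g1 | g1 <;> rcases mul_eq_zero.mp hB' with g2 | g2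
        · right; right; right; left
          have hx' : x = 1 := by linarith
          have hy' : y = -1/2 := by linarith
          rw [hz, hx', hy']
        · right; right; right; right; left
          have hx' : x = 1/2 := by linarith
          have hy' : y = -1 := by linarith
          rw [hz, hx', hy']
        · right; right; right; right; right; left
          have hx' : x = -1/2 := by linarith
          have hy' : y = 1 := by linarith
          rw [hz, hx', hy']
        · right; right; right; right; right; right
          have hx' : x = -1 := by linarith
          have hy' : y = 1/2 := by linarith
          rw [hz, hx', hy']
    · intro h
      rcases h with rfl | rfl | rfl | rfl | rfl | rfl | rfl
      · norm_num
      · exact hsat r (-r) (by linear_combination (-2*r)*hr) (by linear_combination (-2*r)*hr)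
      · exact hsat (-r) r (by linear_combination (2*r)*hr) (by linear_combination (2*r)*hr)
      · exact hsat 1 (-1/2) (by norm_num) (by norm_num)
      · exact hsat (1/2) (-1) (by norm_num) (by norm_num)
      · exact hsat (-1/2) 1 (by norm_num) (by norm_num)
      · exact hsat (-1) (1/2) (by norm_num) (by norm_num)
  refine ⟨hset, ?_⟩
  rw [hset, E0', E0, E1, E2, E3, E4]
  have hrne : r ≠ 1 := by intro h; rw [h] at hr; norm_num at hr
  have hrne2 : r ≠ 1/2 := by intro h; rw [h] at hr; norm_num at hr
  have m0 : (0:ℂ) ∉ ({((r:ℝ):ℂ) + ((-r:ℝ):ℂ)*I, ((-r:ℝ):ℂ) + ((r:ℝ):ℂ)*I,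
      ((1:ℝ):ℂ) + ((-1/2:ℝ):ℂ)*I, ((1/2:ℝ):ℂ) + ((-1:ℝ):ℂ)*I,
      ((-1/2:ℝ):ℂ) + ((1:ℝ):ℂ)*I, ((-1:ℝ):ℂ) + ((1/2:ℝ):ℂ)*I} : Set ℂ) := by
    simp only [Set.mem_insert_iff, Set.mem_singleton_iff, not_or]
    refine ⟨?_,?_,?_,?_,?_,?_⟩ <;> intro h <;>
      (apply_fun Complex.re at h; simp at h; try nlinarith [hr, hr0])
  have m1 : ((r:ℝ):ℂ) + ((-r:ℝ):ℂ)*I ∉ ({((-r:ℝ):ℂ) + ((r:ℝ):ℂ)*I,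
      ((1:ℝ):ℂ) + ((-1/2:ℝ):ℂ)*I, ((1/2:ℝ):ℂ) + ((-1:ℝ):ℂ)*I,
      ((-1/2:ℝ):ℂ) + ((1:ℝ):ℂ)*I, ((-1:ℝ):ℂ) + ((1/2:ℝ):ℂ)*I} : Set ℂ) := by
    simp only [Set.mem_insert_iff, Set.mem_singleton_iff, not_or]
    refine ⟨?_,?_,?_,?_,?_⟩ <;> intro h <;>
      (apply_fun Complex.re at h; simp at h; try nlinarith [hr, hr0])
  have m2 : ((-r:ℝ):ℂ) + ((r:ℝ):ℂ)*I ∉ ({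
      ((1:ℝ):ℂ) + ((-1/2:ℝ):ℂ)*I, ((1/2:ℝ):ℂ) + ((-1:ℝ):ℂ)*I,
      ((-1/2:ℝ):ℂ) + ((1:ℝ):ℂ)*I, ((-1:ℝ):ℂ) + ((1/2:ℝ):ℂ)*I} : Set ℂ) := by
    simp only [Set.mem_insert_iff, Set.mem_singleton_iff, not_or]
    refine ⟨?_,?_,?_,?_⟩ <;> intro h <;>
      (apply_fun Complex.re at h; simp at h; try nlinarith [hr, hr0])
  have m3 : ((1:ℝ):ℂ) + ((-1/2:ℝ):ℂ)*I ∉ ({((1/2:ℝ):ℂ) + ((-1:ℝ):ℂ)*I,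
      ((-1/2:ℝ):ℂ) + ((1:ℝ):ℂ)*I, ((-1:ℝ):ℂ) + ((1/2:ℝ):ℂ)*I} : Set ℂ) := by
    simp only [Set.mem_insert_iff, Set.mem_singleton_iff, not_or]
    refine ⟨?_,?_,?_⟩ <;> intro h <;>
      (apply_fun Complex.re at h; simp at h; try nlinarith [hr, hr0])
  have m4 : ((1/2:ℝ):ℂ) + ((-1:ℝ):ℂ)*I ∉ ({
      ((-1/2:ℝ):ℂ) + ((1:ℝ):ℂ)*I, ((-1:ℝ):ℂ) + ((1/2:ℝ):ℂ)*I} : Set ℂ) := by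
    simp only [Set.mem_insert_iff, Set.mem_singleton_iff, not_or]
    refine ⟨?_,?_⟩ <;> intro h <;>
      (apply_fun Complex.re at h; simp at h; try nlinarith [hr, hr0])
  have m5 : ((-1/2:ℝ):ℂ) + ((1:ℝ):ℂ)*I ∉ ({((-1:ℝ):ℂ) + ((1/2:ℝ):ℂ)*I} : Set ℂ) := by
    simp only [Set.mem_singleton_iff]
    intro h
    apply_fun Complex.re at h; simp at h; try nlinarith [hr, hr0]
  rw [Set.ncard_insert_of_notMem m0, Set.ncard_insert_of_notMem m1,
    Set.ncard_insert_of_notMem m2, Set.ncard_insert_of_notMem m3,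
    Set.ncard_insert_of_notMem m4, Set.ncard_insert_of_notMem m5,
    Set.ncard_singleton]
end

section
/- For real numbers a, b, the harmonic polynomial p(z) = z^3 + a·z + b·conj(z) has exactly 7 zeros in ℂ if and only if b < |a| < 2b. -/
open Complex


private def Zs (a b : ℝ) : Set ℂ :=
  {z : ℂ | z ^ 3 + (a : ℂ) * z + (b : ℂ) * (starRingEnd ℂ) z = 0}

private lemma mem_iff' (a b : ℝ) (z : ℂ) : z ∈ Zs a b ↔
    z.re * (z.re^2 - 3*z.im^2 + a + b) = 0 ∧ z.im * (3*z.re^2 - z.im^2 + a - b) = 0 := by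
  have h1 : (z ^ 3 + (a : ℂ) * z + (b : ℂ) * (starRingEnd ℂ) z).re
      = z.re * (z.re^2 - 3*z.im^2 + a + b) := by
    simp [pow_succ, Complex.mul_re, Complex.mul_im]; ring
  have h2 : (z ^ 3 + (a : ℂ) * z + (b : ℂ) * (starRingEnd ℂ) z).im
      = z.im * (3*z.re^2 - z.im^2 + a - b) := by
    simp [pow_succ, Complex.mul_re, Complex.mul_im]; ring
  rw [Zs, Set.mem_setOf_eq, Complex.ext_iff, h1, h2, Complex.zero_re, Complex.zero_im]

private lemma mem_rot (a b : ℝ) (z : ℂ) : Complex.I * z ∈ Zs (-a) b ↔ z ∈ Zs a b := by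
  rw [mem_iff', mem_iff']
  simp only [Complex.mul_re, Complex.mul_im, Complex.I_re, Complex.I_im]
  constructor <;> rintro ⟨h1, h2⟩ <;> constructor <;> nlinarith [h1, h2]

private lemma rot_eq (a b : ℝ) : Zs (-a) b = (fun z => Complex.I * z) '' Zs a b := by
  ext z
  constructor
  · intro hz
    refine ⟨-Complex.I * z, ?_, by simp [← mul_assoc, Complex.I_mul_I]⟩
    rw [← mem_rot]
    have : Complex.I * (-Complex.I * z) = z := by
      simp [← mul_assoc, Complex.I_mul_I]
    rwa [this]
  · rintro ⟨w, hw, rfl⟩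
    rwa [mem_rot]

private lemma ncard_rot (a b : ℝ) : (Zs (-a) b).ncard = (Zs a b).ncard := by
  rw [rot_eq, Set.ncard_image_of_injective _ (mul_right_injective₀ Complex.I_ne_zero)]


private lemma ncard_le_five {s : Set ℂ} (p q r t u : ℂ) (h : s ⊆ {p, q, r, t, u}) :
    s.ncard ≤ 5 := by
  calc s.ncard ≤ ({p, q, r, t, u} : Set ℂ).ncard := Set.ncard_le_ncard h (Set.toFinite _)
    _ ≤ ({q, r, t, u} : Set ℂ).ncard + 1 := Set.ncard_insert_le _ _
    _ ≤ (({r, t, u} : Set ℂ).ncard + 1) + 1 := by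
        have := Set.ncard_insert_le q ({r, t, u} : Set ℂ); omega
    _ ≤ ((({t, u} : Set ℂ).ncard + 1) + 1) + 1 := by
        have := Set.ncard_insert_le r ({t, u} : Set ℂ); omega
    _ ≤ (((({u} : Set ℂ).ncard + 1) + 1) + 1) + 1 := by
        have := Set.ncard_insert_le t ({u} : Set ℂ); omega
    _ ≤ 5 := by rw [Set.ncard_singleton]


-- Case A: a ≥ 2b
private lemma subA (a b : ℝ) (h : 2*b ≤ a) :
    Zs a b ⊆ {0, (Real.sqrt (a-b) : ℂ) * Complex.I, -((Real.sqrt (a-b) : ℂ) * Complex.I),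
      ((Real.sqrt (-(a+b)) : ℂ)), -((Real.sqrt (-(a+b)) : ℂ))} := by
  intro z hz
  rw [mem_iff'] at hz
  set x := z.re with hx
  set y := z.im with hy
  obtain ⟨h1, h2⟩ := hz
  have keyY : y * (3*x^2 - y^2 + a - b) = 0 → x = 0 →
      z = (Real.sqrt (a-b) : ℂ) * Complex.I ∨ z = -((Real.sqrt (a-b) : ℂ) * Complex.I) ∨ z = 0 := by
    intro h2 hx0
    rcases mul_eq_zero.1 h2 with hy0 | hq2
    · right; right; apply Complex.ext <;> simp [← hx, ← hy, hx0, hy0]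
    · have hy2 : y^2 = a - b := by nlinarith
      have hab : 0 ≤ a - b := hy2 ▸ sq_nonneg y
      have hs : Real.sqrt (a-b) ^ 2 = a - b := Real.sq_sqrt hab
      have : (y - Real.sqrt (a-b)) * (y + Real.sqrt (a-b)) = 0 := by nlinarith
      rcases mul_eq_zero.1 this with hys | hys
      · left; apply Complex.ext <;> simp [← hx, ← hy, hx0] <;> linarith
      · right; left; apply Complex.ext <;> simp [← hx, ← hy, hx0] <;> linarith
  rcases mul_eq_zero.1 h1 with hx0 | hq1
  · rcases keyY h2 hx0 with h | h | h <;> simp [h]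
  · rcases mul_eq_zero.1 h2 with hy0 | hq2
    · -- y = 0, x² = -(a+b)
      set r : ℝ := Real.sqrt (-(a+b)) with hrdef
      have hx2 : x^2 = -(a+b) := by nlinarith
      have hab : 0 ≤ -(a+b) := hx2 ▸ sq_nonneg x
      have hr : r ^ 2 = -(a+b) := Real.sq_sqrt hab
      have : (x - r) * (x + r) = 0 := by nlinarith
      rcases mul_eq_zero.1 this with hxs | hxs
      · have : z = (r : ℂ) := by
          apply Complex.ext <;> simp [← hx, ← hy, hy0] <;> linarith
        simp [this]
      · have : z = -((r : ℂ)) := by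
          apply Complex.ext <;> simp [← hx, ← hy, hy0] <;> linarith
        simp [this]
    · -- both quadratics; a ≥ 2b forces x = 0
      have hx2 : x^2 = (2*b - a)/4 := by nlinarith
      have hx0 : x = 0 := by nlinarith [sq_nonneg x]
      rcases keyY h2 hx0 with h | h | h <;> simp [h]


-- Case B: 0 ≤ a ≤ b
private lemma subB (a b : ℝ) (ha : 0 ≤ a) (hab : a ≤ b) :
    Zs a b ⊆ {0,
      (Real.sqrt ((2*b-a)/4) : ℂ) + (Real.sqrt ((a+2*b)/4) : ℂ) * Complex.I,
      (Real.sqrt ((2*b-a)/4) : ℂ) - (Real.sqrt ((a+2*b)/4) : ℂ) * Complex.I,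
      -(Real.sqrt ((2*b-a)/4) : ℂ) + (Real.sqrt ((a+2*b)/4) : ℂ) * Complex.I,
      -(Real.sqrt ((2*b-a)/4) : ℂ) - (Real.sqrt ((a+2*b)/4) : ℂ) * Complex.I} := by
  intro z hz
  rw [mem_iff'] at hz
  set x := z.re with hx
  set y := z.im with hy
  set u : ℝ := Real.sqrt ((2*b-a)/4) with hudef
  set v : ℝ := Real.sqrt ((a+2*b)/4) with hvdef
  have hb : 0 ≤ b := le_trans ha hab
  have hu : u ^ 2 = (2*b-a)/4 := Real.sq_sqrt (by linarith)
  have hv : v ^ 2 = (a+2*b)/4 := Real.sq_sqrt (by linarith)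
  obtain ⟨h1, h2⟩ := hz
  rcases mul_eq_zero.1 h1 with hx0 | hq1
  · rcases mul_eq_zero.1 h2 with hy0 | hq2
    · left; apply Complex.ext <;> simp [← hx, ← hy, hx0, hy0]
    · have hy0 : y = 0 := by nlinarith [sq_nonneg y]
      left; apply Complex.ext <;> simp [← hx, ← hy, hx0, hy0]
  · rcases mul_eq_zero.1 h2 with hy0 | hq2
    · have hx0 : x = 0 := by nlinarith [sq_nonneg x]
      left; apply Complex.ext <;> simp [← hx, ← hy, hx0, hy0]
    · have hxu : (x - u) * (x + u) = 0 := by nlinarith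
      have hyv : (y - v) * (y + v) = 0 := by nlinarith
      rcases mul_eq_zero.1 hxu with h3 | h3 <;> rcases mul_eq_zero.1 hyv with h4 | h4
      · right; left; apply Complex.ext <;> simp [← hx, ← hy] <;> linarith
      · right; right; left; apply Complex.ext <;> simp [← hx, ← hy] <;> linarith
      · right; right; right; left; apply Complex.ext <;> simp [← hx, ← hy] <;> linarith
      · right; right; right; right
        simp only [Set.mem_singleton_iff]
        apply Complex.ext <;> simp [← hx, ← hy] <;> linarith


set_option maxHeartbeats 1600000 in
private lemma pos_case (a b : ℝ) (hba : b < a) (hab : a < 2*b) :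
    (Zs a b).ncard = 7 := by
  have hb : 0 < b := by linarith
  obtain ⟨s, hs, hspos⟩ : ∃ x : ℝ, x ^ 2 = a - b ∧ 0 < x :=
    ⟨Real.sqrt (a-b), Real.sq_sqrt (by linarith), Real.sqrt_pos.2 (by linarith)⟩
  obtain ⟨u, hu, hupos⟩ : ∃ x : ℝ, x ^ 2 = (2*b-a)/4 ∧ 0 < x :=
    ⟨Real.sqrt ((2*b-a)/4), Real.sq_sqrt (by linarith), Real.sqrt_pos.2 (by linarith)⟩
  obtain ⟨v, hv, hvpos⟩ : ∃ x : ℝ, x ^ 2 = (a+2*b)/4 ∧ 0 < x :=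
    ⟨Real.sqrt ((a+2*b)/4), Real.sq_sqrt (by linarith), Real.sqrt_pos.2 (by linarith)⟩
  have hset : Zs a b = {0, (s : ℂ) * Complex.I, -((s : ℂ) * Complex.I),
      (u : ℂ) + (v : ℂ) * Complex.I, (u : ℂ) - (v : ℂ) * Complex.I,
      -(u : ℂ) + (v : ℂ) * Complex.I, -(u : ℂ) - (v : ℂ) * Complex.I} := by
    ext z
    rw [mem_iff']
    constructor
    · rintro ⟨h1, h2⟩
      set x := z.re with hx
      set y := z.im with hy
      rcases mul_eq_zero.1 h1 with hx0 | hq1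
      · rcases mul_eq_zero.1 h2 with hy0 | hq2
        · left; apply Complex.ext <;> simp [← hx, ← hy, hx0, hy0]
        · have hys : (y - s) * (y + s) = 0 := by nlinarith
          rcases mul_eq_zero.1 hys with h3 | h3
          · right; left; apply Complex.ext <;> simp [← hx, ← hy, hx0] <;> linarith
          · right; right; left
            apply Complex.ext <;> simp [← hx, ← hy, hx0] <;> linarith
      · rcases mul_eq_zero.1 h2 with hy0 | hq2
        · exfalso; nlinarith [sq_nonneg x]
        · have hxu : (x - u) * (x + u) = 0 := by nlinarith
          have hyv : (y - v) * (y + v) = 0 := by nlinarith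
          rcases mul_eq_zero.1 hxu with h3 | h3 <;> rcases mul_eq_zero.1 hyv with h4 | h4
          · right; right; right; left
            apply Complex.ext <;> simp [← hx, ← hy] <;> linarith
          · right; right; right; right; left
            apply Complex.ext <;> simp [← hx, ← hy] <;> linarith
          · right; right; right; right; right; left
            apply Complex.ext <;> simp [← hx, ← hy] <;> linarith
          · right; right; right; right; right; right
            simp only [Set.mem_singleton_iff]
            apply Complex.ext <;> simp [← hx, ← hy] <;> linarith
    · intro hmem
      rcases hmem with h | h | h | h | h | h | h <;> subst h <;>
        refine ⟨?_, ?_⟩ <;> simp [-mul_eq_zero] <;>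
        (try rw [hs]) <;> (try rw [hu]) <;> (try rw [hv]) <;> ring
  rw [hset]
  have tac6 : (0:ℂ) ∉ ({(s : ℂ) * Complex.I, -((s : ℂ) * Complex.I),
      (u : ℂ) + (v : ℂ) * Complex.I, (u : ℂ) - (v : ℂ) * Complex.I,
      -(u : ℂ) + (v : ℂ) * Complex.I, -(u : ℂ) - (v : ℂ) * Complex.I} : Set ℂ) := by
    simp only [Set.mem_insert_iff, Set.mem_singleton_iff, not_or]
    refine ⟨?_, ?_, ?_, ?_, ?_, ?_⟩ <;> intro h <;>
      have h1 := congrArg Complex.re h <;> have h2 := congrArg Complex.im h <;>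
      simp at h1 h2 <;> nlinarith
  have tac5 : (s : ℂ) * Complex.I ∉ ({-((s : ℂ) * Complex.I),
      (u : ℂ) + (v : ℂ) * Complex.I, (u : ℂ) - (v : ℂ) * Complex.I,
      -(u : ℂ) + (v : ℂ) * Complex.I, -(u : ℂ) - (v : ℂ) * Complex.I} : Set ℂ) := by
    simp only [Set.mem_insert_iff, Set.mem_singleton_iff, not_or]
    refine ⟨?_, ?_, ?_, ?_, ?_⟩ <;> intro h <;>
      have h1 := congrArg Complex.re h <;> have h2 := congrArg Complex.im h <;>
      simp at h1 h2 <;> nlinarith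
  have tac4 : -((s : ℂ) * Complex.I) ∉ ({
      (u : ℂ) + (v : ℂ) * Complex.I, (u : ℂ) - (v : ℂ) * Complex.I,
      -(u : ℂ) + (v : ℂ) * Complex.I, -(u : ℂ) - (v : ℂ) * Complex.I} : Set ℂ) := by
    simp only [Set.mem_insert_iff, Set.mem_singleton_iff, not_or]
    refine ⟨?_, ?_, ?_, ?_⟩ <;> intro h <;>
      have h1 := congrArg Complex.re h <;> have h2 := congrArg Complex.im h <;>
      simp at h1 h2 <;> nlinarith
  have tac3 : (u : ℂ) + (v : ℂ) * Complex.I ∉ ({(u : ℂ) - (v : ℂ) * Complex.I,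
      -(u : ℂ) + (v : ℂ) * Complex.I, -(u : ℂ) - (v : ℂ) * Complex.I} : Set ℂ) := by
    simp only [Set.mem_insert_iff, Set.mem_singleton_iff, not_or]
    refine ⟨?_, ?_, ?_⟩ <;> intro h <;>
      have h1 := congrArg Complex.re h <;> have h2 := congrArg Complex.im h <;>
      simp at h1 h2 <;> nlinarith
  have tac2 : (u : ℂ) - (v : ℂ) * Complex.I ∉ ({
      -(u : ℂ) + (v : ℂ) * Complex.I, -(u : ℂ) - (v : ℂ) * Complex.I} : Set ℂ) := by
    simp only [Set.mem_insert_iff, Set.mem_singleton_iff, not_or]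
    refine ⟨?_, ?_⟩ <;> intro h <;>
      have h1 := congrArg Complex.re h <;> have h2 := congrArg Complex.im h <;>
      simp at h1 h2 <;> nlinarith
  have tac1 : -(u : ℂ) + (v : ℂ) * Complex.I ∉ ({
      -(u : ℂ) - (v : ℂ) * Complex.I} : Set ℂ) := by
    simp only [Set.mem_singleton_iff]
    intro h
    have h2 := congrArg Complex.im h
    simp at h2; nlinarith
  rw [Set.ncard_insert_of_notMem tac6 (Set.toFinite _),
      Set.ncard_insert_of_notMem tac5 (Set.toFinite _),
      Set.ncard_insert_of_notMem tac4 (Set.toFinite _),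
      Set.ncard_insert_of_notMem tac3 (Set.toFinite _),
      Set.ncard_insert_of_notMem tac2 (Set.toFinite _),
      Set.ncard_insert_of_notMem tac1 (Set.toFinite _),
      Set.ncard_singleton]

private lemma aux_case (a b : ℝ) (ha : 0 ≤ a) :
    (Zs a b).ncard = 7 ↔ b < a ∧ a < 2 * b := by
  constructor
  · intro h7
    by_contra hcon
    rw [not_and_or, not_lt, not_lt] at hcon
    rcases hcon with h1 | h2
    · have := ncard_le_five _ _ _ _ _ (subB a b ha h1)
      omega
    · have := ncard_le_five _ _ _ _ _ (subA a b h2)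
      omega
  · rintro ⟨hba, hab⟩
    exact pos_case a b hba hab

/-- The harmonic polynomial `z³ + a·z + b·conj z` has exactly 7 zeros in `ℂ`
iff `b < |a| < 2b`. -/
theorem cubic_harmonic_seven_zeros_iff (a b : ℝ) :
    {z : ℂ | z ^ 3 + (a : ℂ) * z + (b : ℂ) * (starRingEnd ℂ) z = 0}.ncard = 7 ↔
      b < |a| ∧ |a| < 2 * b := by
  show (Zs a b).ncard = 7 ↔ _
  rcases le_or_gt 0 a with ha | ha
  · rw [_root_.abs_of_nonneg ha]
    exact aux_case a b ha
  · rw [_root_.abs_of_neg ha]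
    have hrot : (Zs a b).ncard = (Zs (-a) b).ncard := by
      have h := ncard_rot (-a) b
      simpa using h
    rw [hrot]
    exact aux_case (-a) b (by linarith)
end

section
/- Let a, b ∈ ℝ with b < -a < 2b. Then the product over all seven roots λ of z³ + a·z + b·conj(z) = 0 of (z - λ) equals z^7 + (2a+b)·z^5 + (a²+b²+ab)·z^3 + (b³+ab²)·z. -/
open Complex

/-- For `b < -a < 2b`, the product of `(z - λ)` over the seven roots
`{0, ±√(-a-b), ±(√(-a+2b)/2 + i√(a+2b)/2), ±(√(-a+2b)/2 - i√(a+2b)/2)}`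
of `z³ + a·z + b·conj z = 0` equals
`z⁷ + (2a+b)z⁵ + (a²+b²+ab)z³ + (b³+ab²)z`. -/
theorem cubic_harmonic_root_product (a b : ℝ) (h1 : b < -a) (h2 : -a < 2 * b) (z : ℂ) :
    (z - 0) * (z - (Real.sqrt (-a - b) : ℂ)) * (z - (-(Real.sqrt (-a - b) : ℂ)))
        * (z - ((Real.sqrt (-a + 2 * b) : ℂ) / 2 + Complex.I * ((Real.sqrt (a + 2 * b) : ℂ) / 2)))
        * (z - (-((Real.sqrt (-a + 2 * b) : ℂ) / 2 + Complex.I * ((Real.sqrt (a + 2 * b) : ℂ) / 2))))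
        * (z - ((Real.sqrt (-a + 2 * b) : ℂ) / 2 - Complex.I * ((Real.sqrt (a + 2 * b) : ℂ) / 2)))
        * (z - (-((Real.sqrt (-a + 2 * b) : ℂ) / 2 - Complex.I * ((Real.sqrt (a + 2 * b) : ℂ) / 2)))) =
      z ^ 7 + ((2 * a + b : ℝ) : ℂ) * z ^ 5 + ((a ^ 2 + b ^ 2 + a * b : ℝ) : ℂ) * z ^ 3
        + ((b ^ 3 + a * b ^ 2 : ℝ) : ℂ) * z := by
  set S : ℂ := (Real.sqrt (-a - b) : ℂ) with hSdef
  set U : ℂ := (Real.sqrt (-a + 2 * b) : ℂ) with hUdef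
  set V : ℂ := (Real.sqrt (a + 2 * b) : ℂ) with hVdef
  have hS : S ^ 2 = (-a - b : ℂ) := by
    rw [hSdef, ← Complex.ofReal_pow, Real.sq_sqrt (by linarith)]; push_cast; ring
  have hU : U ^ 2 = (-a + 2 * b : ℂ) := by
    rw [hUdef, ← Complex.ofReal_pow, Real.sq_sqrt (by linarith)]; push_cast; ring
  have hV : V ^ 2 = (a + 2 * b : ℂ) := by
    rw [hVdef, ← Complex.ofReal_pow, Real.sq_sqrt (by linarith)]; push_cast; ring
  have hI : Complex.I ^ 2 = -1 := Complex.I_sq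
  push_cast
  linear_combination ((-1)*z^5 + ((1/2))*V^2*Complex.I^2*z^3 + ((-1/16))*V^4*Complex.I^4*z + ((1/2))*U^2*z^3 + ((1/8))*U^2*V^2*Complex.I^2*z + ((-1/16))*U^4*z)*hS + (((1/8))*z*(b:ℂ)^2 + ((1/16))*z*(a:ℂ)*(b:ℂ) + ((-1/16))*z*(a:ℂ)^2 + ((-3/8))*z^3*(b:ℂ) + ((-9/16))*z^3*(a:ℂ) + ((-1/2))*z^5 + ((-1/8))*V^2*Complex.I^2*z*(b:ℂ) + ((-1/8))*V^2*Complex.I^2*z*(a:ℂ) + ((-1/8))*V^2*Complex.I^2*z^3 + ((1/16))*U^2*z*(b:ℂ) + ((1/16))*U^2*z*(a:ℂ) + ((1/16))*U^2*z^3)*hU + (((-1/4))*Complex.I^2*z*(b:ℂ)^2 + ((-1/8))*Complex.I^2*z*(a:ℂ)*(b:ℂ) + ((1/8))*Complex.I^2*z*(a:ℂ)^2 + ((-3/4))*Complex.I^2*z^3*(b:ℂ) + ((-3/8))*Complex.I^2*z^3*(a:ℂ) + ((-1/2))*Complex.I^2*z^5 + ((1/8))*Complex.I^4*z*(b:ℂ)^2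 + ((3/16))*Complex.I^4*z*(a:ℂ)*(b:ℂ) + ((1/16))*Complex.I^4*z*(a:ℂ)^2 + ((1/8))*Complex.I^4*z^3*(b:ℂ) + ((1/16))*Complex.I^4*z^3*(a:ℂ) + ((1/16))*V^2*Complex.I^4*z*(b:ℂ) + ((1/16))*V^2*Complex.I^4*z*(a:ℂ) + ((1/16))*V^2*Complex.I^4*z^3)*hV + (((-3/4))*z*(b:ℂ)^3 + (-1)*z*(a:ℂ)*(b:ℂ)^2 + ((-3/16))*z*(a:ℂ)^2*(b:ℂ) + ((1/16))*z*(a:ℂ)^3 + ((-7/4))*z^3*(b:ℂ)^2 + ((-7/4))*z^3*(a:ℂ)*(b:ℂ) + ((-7/16))*z^3*(a:ℂ)^2 + (-1)*z^5*(b:ℂ) + ((-1/2))*z^5*(a:ℂ) + ((1/4))*Complex.I^2*z*(b:ℂ)^3 + ((1/2))*Complex.I^2*z*(a:ℂ)*(b:ℂ)^2 + ((5/16))*Complex.I^2*z*(a:ℂ)^2*(b:ℂ) + ((1/16))*Complex.I^2*z*(a:ℂ)^3 + ((1/4))*Complex.I^2*z^3*(b:ℂ)^2 + ((1/4))*Complex.I^2*z^3*(a:ℂ)*(b:ℂ)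 + ((1/16))*Complex.I^2*z^3*(a:ℂ)^2)*hI
end

section
/- Let B be a positive semidefinite sesquilinear form on ℂ[z,w] satisfying B(g·h, f) = B(h, f·ḡ) for all polynomials f, g, h (where p̄ conjugates coefficients and swaps variables). If B(p², q) = 0 for all q, then B(p, q) = 0 for all q. More generally, if B(pⁿ, ·) = 0 for some n ≥ 1 then B(p, ·) = 0. -/
open MvPolynomial

/-- The involution on `ℂ[z,w]` conjugating coefficients and swapping the
two variables. -/
noncomputable def polyBar (p : MvPolynomial (Fin 2) ℂ) : MvPolynomial (Fin 2) ℂ :=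
  MvPolynomial.rename (Equiv.swap (0 : Fin 2) 1)
    (MvPolynomial.map (starRingEnd ℂ) p)

lemma polyBar_polyBar (p : MvPolynomial (Fin 2) ℂ) : polyBar (polyBar p) = p := by
  simp only [polyBar, MvPolynomial.map_rename, MvPolynomial.rename_rename,
    MvPolynomial.map_map]
  have h1 : (starRingEnd ℂ).comp (starRingEnd ℂ) = RingHom.id ℂ := by
    ext z; simp
  have h2 : (⇑(Equiv.swap (0 : Fin 2) 1)) ∘ (⇑(Equiv.swap (0 : Fin 2) 1)) = id := by
    ext i; simp
  rw [h1, h2, MvPolynomial.map_id]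
  simpa using MvPolynomial.rename_id (R := ℂ) p

lemma deg_cs
    (B : MvPolynomial (Fin 2) ℂ →ₗ[ℂ]
          MvPolynomial (Fin 2) ℂ →ₛₗ[starRingEnd ℂ] ℂ)
    (hsym : ∀ p q, B p q = (starRingEnd ℂ) (B q p))
    (hpos : ∀ p, 0 ≤ (B p p).re)
    (x : MvPolynomial (Fin 2) ℂ) (hx : B x x = 0) :
    ∀ y, B x y = 0 := by
  intro y
  by_contra hc
  set c := B x y with hcdef
  have hm : 0 < Complex.normSq c := by
    simpa [Complex.normSq_pos] using hc
  set m := Complex.normSq c with hmdef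
  set R := (B y y).re with hRdef
  have hR : 0 ≤ R := hpos y
  set s : ℝ := 1 / (R + 1) with hsdef
  have hs : 0 < s := by positivity
  have hR1 : R + 1 ≠ 0 := by positivity
  have hs1 : s * (R + 1) = 1 := by rw [hsdef]; field_simp
  set t : ℂ := -(s : ℂ) * c with htdef
  have hyx : B y x = (starRingEnd ℂ) c := hsym y x
  have hct : (starRingEnd ℂ) t = -(s : ℂ) * (starRingEnd ℂ) c := by
    rw [htdef, map_mul, map_neg, Complex.conj_ofReal]
  have hcc : (starRingEnd ℂ) c * c = (m : ℂ) := by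
    rw [hmdef, Complex.normSq_eq_conj_mul_self]
  have hcc2 : c * (starRingEnd ℂ) c = (m : ℂ) := by rw [mul_comm]; exact hcc
  have hval : B (x + t • y) (x + t • y)
      = (starRingEnd ℂ) t * c + t * ((starRingEnd ℂ) c + (starRingEnd ℂ) t * B y y) := by
    simp [map_add, LinearMap.add_apply, map_smulₛₗ, smul_eq_mul, hx, hyx, ← hcdef]
    ring
  have hval2 : B (x + t • y) (x + t • y)
      = ((-2 * s * m : ℝ) : ℂ) + ((s ^ 2 * m : ℝ) : ℂ) * B y y := by
    rw [hval, hct, htdef]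
    calc (-(s:ℂ) * (starRingEnd ℂ) c) * c
          + (-(s:ℂ) * c) * ((starRingEnd ℂ) c + (-(s:ℂ) * (starRingEnd ℂ) c) * B y y)
        = -(s:ℂ) * ((starRingEnd ℂ) c * c) - (s:ℂ) * (c * (starRingEnd ℂ) c)
          + (s:ℂ)^2 * (c * (starRingEnd ℂ) c) * B y y := by ring
      _ = ((-2 * s * m : ℝ) : ℂ) + ((s ^ 2 * m : ℝ) : ℂ) * B y y := by
          rw [hcc, hcc2]; push_cast; ring
  have hkey : 0 ≤ -2 * s * m + s ^ 2 * m * R := by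
    have h0 := hpos (x + t • y)
    rw [hval2] at h0
    have h2 : (((-2 * s * m : ℝ) : ℂ) + ((s ^ 2 * m : ℝ) : ℂ) * B y y).re
        = -2 * s * m + s ^ 2 * m * R := by
      simp only [Complex.add_re, Complex.ofReal_re, Complex.re_ofReal_mul, ← hRdef]
    rw [h2] at h0
    exact h0
  nlinarith [mul_pos hs hm, hs1, hR, hm, hs]

/-- If `B` is a positive semidefinite, conjugate-symmetric sesquilinear form on
`ℂ[z,w]` satisfying `B(g·h, f) = B(h, f·ḡ)`, and `B(pⁿ, ·) = 0` for some
`n ≥ 1`, then `B(p, ·) = 0`. -/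
theorem sesq_pow_eq_zero
    (B : MvPolynomial (Fin 2) ℂ →ₗ[ℂ]
          MvPolynomial (Fin 2) ℂ →ₛₗ[starRingEnd ℂ] ℂ)
    (hsym : ∀ p q, B p q = (starRingEnd ℂ) (B q p))
    (hpos : ∀ p, 0 ≤ (B p p).re)
    (hmul : ∀ f g h, B (g * h) f = B h (f * polyBar g))
    (p : MvPolynomial (Fin 2) ℂ) (n : ℕ) (hn : 1 ≤ n)
    (hzero : ∀ q, B (p ^ n) q = 0) :
    ∀ q, B p q = 0 := by
  have step : ∀ k : ℕ, (∀ q, B (p ^ (k + 2)) q = 0) → ∀ q, B (p ^ (k + 1)) q = 0 := by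
    intro k hk
    -- y := p^(k+1) * polyBar p satisfies B y y = 0
    have hy : B (p ^ (k + 1) * polyBar p) (p ^ (k + 1) * polyBar p) = 0 := by
      have h1 : B (polyBar p * p ^ (k + 1)) (p ^ (k + 1) * polyBar p)
          = B (p ^ (k + 1)) ((p ^ (k + 1) * polyBar p) * polyBar (polyBar p)) :=
        hmul _ _ _
      rw [polyBar_polyBar] at h1
      rw [show (p ^ (k + 1) * polyBar p) * p = p ^ (k + 2) * polyBar p by ring] at h1
      rw [show polyBar p * p ^ (k + 1) = p ^ (k + 1) * polyBar p by ring] at h1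
      have h3 : B (p * p ^ (k + 1)) (p ^ (k + 2))
          = B (p ^ (k + 1)) (p ^ (k + 2) * polyBar p) := hmul _ _ _
      rw [show p * p ^ (k + 1) = p ^ (k + 2) by ring] at h3
      rw [h1, ← h3, hk]
    have hyall := deg_cs B hsym hpos _ hy
    have hxx : B (p ^ (k + 1)) (p ^ (k + 1)) = 0 := by
      have h1 : B (p * p ^ k) (p ^ (k + 1))
          = B (p ^ k) (p ^ (k + 1) * polyBar p) := hmul _ _ _
      rw [show p * p ^ k = p ^ (k + 1) by ring] at h1
      rw [h1, hsym, hyall (p ^ k)]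
      simp
    exact deg_cs B hsym hpos _ hxx
  obtain ⟨m, rfl⟩ : ∃ m, n = m + 1 := ⟨n - 1, (Nat.succ_pred_eq_of_pos hn).symm⟩
  clear hn
  induction m with
  | zero => simpa using hzero
  | succ m ih => exact ih (step m hzero)
end

section
/- Let μ be a finite positive Borel measure on ℂ with finite moments γ(i,j) = ∫ conj(z)^i z^j dμ for all i,j, and let P(z) = z^{r+1} - Σ_{l+k ≤ r} a_{lk} conj(z)^l z^k. If ∫ conj(z)^i z^{n-r} P(z, conj z) dμ = 0 for all i ≥ 0 and n ≥ r, then ∫ |P(z, conj z)|² dμ = 0, and hence μ is supported in the zero set of P. -/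
open MeasureTheory Complex

/-- If all the shifted moments `∫ z̄^i z^{n-r} P(z, z̄) dμ` of the characteristic
polynomial `P(z, z̄) = z^{r+1} - ∑_{l+k ≤ r} a_{lk} z̄^l z^k` vanish, then
`∫ |P|² dμ = 0`, hence `μ` is supported in the zero set of `P`. -/
theorem support_in_zero_set_of_char
    (μ : Measure ℂ) [IsFiniteMeasure μ] (r : ℕ) (a : ℕ → ℕ → ℂ)
    (P : ℂ → ℂ)
    (hP : ∀ z, P z = z ^ (r + 1) -
      ∑ l ∈ Finset.range (r + 1), ∑ k ∈ Finset.range (r + 1 - l),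
        a l k * (starRingEnd ℂ) z ^ l * z ^ k)
    (hint : ∀ i j : ℕ, Integrable (fun z : ℂ => (starRingEnd ℂ) z ^ i * z ^ j) μ)
    (hmom : ∀ i n : ℕ, r ≤ n →
      ∫ z, (starRingEnd ℂ) z ^ i * z ^ (n - r) * P z ∂μ = 0) :
    (∫ z, ‖P z‖ ^ 2 ∂μ = 0) ∧ μ {z : ℂ | P z ≠ 0} = 0 := by
  -- Expansion of z̄^i z^j P z into monomials
  have hexp : ∀ i j : ℕ, (fun z : ℂ => (starRingEnd ℂ) z ^ i * z ^ j * P z) =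
      fun z : ℂ => (starRingEnd ℂ) z ^ i * z ^ (j + (r + 1)) -
        ∑ l ∈ Finset.range (r + 1), ∑ k ∈ Finset.range (r + 1 - l),
          a l k * ((starRingEnd ℂ) z ^ (i + l) * z ^ (j + k)) := by
    intro i j
    funext z
    rw [hP z, mul_sub, Finset.mul_sum]
    congr 1
    · ring
    · refine Finset.sum_congr rfl fun l _ => ?_
      rw [Finset.mul_sum]
      refine Finset.sum_congr rfl fun k _ => ?_
      ring
  -- Integrability of z̄^i z^j P z
  have intP : ∀ i j : ℕ, Integrable (fun z : ℂ => (starRingEnd ℂ) z ^ i * z ^ j * P z) μ := by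
    intro i j
    rw [hexp i j]
    exact (hint i (j + (r + 1))).sub <| integrable_finset_sum _ fun l _ =>
      integrable_finset_sum _ fun k _ => (hint (i + l) (j + k)).const_mul (a l k)
  -- Vanishing moments of P
  have momP : ∀ i j : ℕ, ∫ z, (starRingEnd ℂ) z ^ i * z ^ j * P z ∂μ = 0 := by
    intro i j
    have := hmom i (j + r) (Nat.le_add_left r j)
    simpa using this
  -- conj (P z) expansion
  have hconj : ∀ z : ℂ, (starRingEnd ℂ) (P z) * P z =
      (starRingEnd ℂ) z ^ (r + 1) * z ^ 0 * P z -
        ∑ l ∈ Finset.range (r + 1), ∑ k ∈ Finset.range (r + 1 - l),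
          (starRingEnd ℂ) (a l k) * ((starRingEnd ℂ) z ^ k * z ^ l * P z) := by
    intro z
    have : (starRingEnd ℂ) (P z) = (starRingEnd ℂ) z ^ (r + 1) -
        ∑ l ∈ Finset.range (r + 1), ∑ k ∈ Finset.range (r + 1 - l),
          (starRingEnd ℂ) (a l k) * ((starRingEnd ℂ) z ^ k * z ^ l) := by
      rw [hP z, map_sub, map_pow, map_sum]
      congr 1
      refine Finset.sum_congr rfl fun l _ => ?_
      rw [map_sum]
      refine Finset.sum_congr rfl fun k _ => ?_
      simp only [map_mul, map_pow, Complex.conj_conj]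
      ring
    rw [this, sub_mul, Finset.sum_mul, pow_zero, mul_one]
    congr 1
    refine Finset.sum_congr rfl fun l _ => ?_
    rw [Finset.sum_mul]
    refine Finset.sum_congr rfl fun k _ => ?_
    ring
  -- Integrability of conj P * P
  have intG : Integrable (fun z : ℂ => (starRingEnd ℂ) (P z) * P z) μ := by
    have : (fun z : ℂ => (starRingEnd ℂ) (P z) * P z) =
        fun z : ℂ => (starRingEnd ℂ) z ^ (r + 1) * z ^ 0 * P z -
          ∑ l ∈ Finset.range (r + 1), ∑ k ∈ Finset.range (r + 1 - l),
            (starRingEnd ℂ) (a l k) * ((starRingEnd ℂ) z ^ k * z ^ l * P z) :=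
      funext hconj
    rw [this]
    exact (intP (r + 1) 0).sub <| integrable_finset_sum _ fun l _ =>
      integrable_finset_sum _ fun k _ => (intP k l).const_mul _
  -- The integral of conj P * P vanishes
  have intzero : ∫ z, (starRingEnd ℂ) (P z) * P z ∂μ = 0 := by
    rw [funext hconj]
    rw [integral_sub (intP (r + 1) 0) (integrable_finset_sum _ fun l _ =>
      integrable_finset_sum _ fun k _ => (intP k l).const_mul _)]
    rw [integral_finset_sum _ fun l _ =>
      integrable_finset_sum _ fun k _ => (intP k l).const_mul _]
    rw [momP (r + 1) 0]
    simp only [zero_sub, neg_eq_zero]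
    refine Finset.sum_eq_zero fun l _ => ?_
    rw [integral_finset_sum _ fun k _ => (intP k l).const_mul _]
    refine Finset.sum_eq_zero fun k _ => ?_
    rw [integral_const_mul, momP k l, mul_zero]
  -- conj P * P = ‖P‖² as a complex number
  have hre : ∀ z : ℂ, (starRingEnd ℂ) (P z) * P z = ((‖P z‖ ^ 2 : ℝ) : ℂ) := by
    intro z
    have := RCLike.conj_mul (K := ℂ) (P z)
    push_cast at this ⊢
    exact this
  have h1 : ∫ z, ‖P z‖ ^ 2 ∂μ = 0 := by
    have h2 : ∫ z, ((‖P z‖ ^ 2 : ℝ) : ℂ) ∂μ = 0 := by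
      rw [← intzero]
      exact integral_congr_ae (Filter.Eventually.of_forall fun z => (hre z).symm)
    have h3 : ((∫ z, ‖P z‖ ^ 2 ∂μ : ℝ) : ℂ) = 0 := by
      rw [← h2]
      exact (integral_ofReal (f := fun z => ‖P z‖ ^ 2)).symm
    exact_mod_cast h3
  refine ⟨h1, ?_⟩
  have intR : Integrable (fun z : ℂ => ‖P z‖ ^ 2) μ := by
    have := intG.re
    refine this.congr (Filter.Eventually.of_forall fun z => ?_)
    simp [hre z, ← Complex.ofReal_pow]
  have hae : (fun z : ℂ => ‖P z‖ ^ 2) =ᵐ[μ] 0 := by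
    rw [← integral_eq_zero_iff_of_nonneg (fun z => sq_nonneg _) intR]
    exact h1
  have this' : μ {z : ℂ | ¬ ‖P z‖ ^ 2 = 0} = 0 := by
    simpa only [Filter.EventuallyEq, ae_iff, Pi.zero_apply] using hae
  refine measure_mono_null (fun z hz => ?_) this'
  simp only [Set.mem_setOf_eq] at hz ⊢
  intro h
  exact hz (by simpa using h)
end

section
/- Let γ : ℕ × ℕ → ℂ satisfy γ(j,i) = conj(γ(i,j)) and suppose there is a finitely atomic positive measure μ supported in Z(P) = {z : P(z, conj z) = 0} with γ(i,j) = ∫ conj(z)^i z^j dμ for all 0 ≤ i, j ≤ r, where P(z, z̄) = z^{r+1} - Σ_{l+k ≤ r} a_{lk} z̄^l z^k, and γ satisfies the recursion γ(i, n+1) = Σ_{l+k ≤ r} a_{lk} γ(l+i, n+k-r) for all i ≥ 0, n ≥ r. Then γ(i,j) = ∫ conj(z)^i z^j dμ for ALL i, j ≥ 0. -/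
open Complex

/-- If a finitely atomic positive measure supported in the zero set of the
characteristic polynomial `P(z, z̄) = z^{r+1} - ∑_{l+k ≤ r} a_{lk} z̄^l z^k`
represents the initial data `γ(i,j)`, `0 ≤ i, j ≤ r`, of a recursively
generated doubly indexed sequence `γ`, then it represents all of `γ`. -/
theorem finitely_atomic_represents_full_sequence
    (γ : ℕ → ℕ → ℂ) (r : ℕ) (a : ℕ → ℕ → ℂ)
    (hherm : ∀ i j, γ j i = (starRingEnd ℂ) (γ i j))
    (atoms : Finset ℂ) (c : ℂ → ℝ) (hc : ∀ l ∈ atoms, 0 ≤ c l)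
    (hsupp : ∀ l ∈ atoms,
      l ^ (r + 1) - ∑ i ∈ Finset.range (r + 1), ∑ k ∈ Finset.range (r + 1 - i),
        a i k * (starRingEnd ℂ) l ^ i * l ^ k = 0)
    (hinit : ∀ i j : ℕ, i ≤ r → j ≤ r →
      γ i j = ∑ l ∈ atoms, (c l : ℂ) * (starRingEnd ℂ) l ^ i * l ^ j)
    (hrec : ∀ i n : ℕ, r ≤ n →
      γ i (n + 1) = ∑ l ∈ Finset.range (r + 1), ∑ k ∈ Finset.range (r + 1 - l),
        a l k * γ (l + i) (n + k - r)) :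
    ∀ i j : ℕ, γ i j = ∑ l ∈ atoms, (c l : ℂ) * (starRingEnd ℂ) l ^ i * l ^ j := by
  set F : ℕ → ℕ → ℂ :=
    fun i j => ∑ l ∈ atoms, (c l : ℂ) * (starRingEnd ℂ) l ^ i * l ^ j with hF
  have hFherm : ∀ i j, F j i = (starRingEnd ℂ) (F i j) := by
    intro i j
    simp only [hF, map_sum, map_mul, map_pow, Complex.conj_conj, Complex.conj_ofReal]
    exact Finset.sum_congr rfl fun l _ => by ring
  have hFrec : ∀ i n : ℕ, r ≤ n →
      F i (n + 1) = ∑ l ∈ Finset.range (r + 1), ∑ k ∈ Finset.range (r + 1 - l),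
        a l k * F (l + i) (n + k - r) := by
    intro i n hn
    have key : ∀ x ∈ atoms, (c x : ℂ) * (starRingEnd ℂ) x ^ i * x ^ (n + 1)
        = ∑ p ∈ Finset.range (r + 1), ∑ k ∈ Finset.range (r + 1 - p),
          a p k * ((c x : ℂ) * (starRingEnd ℂ) x ^ (p + i) * x ^ (n + k - r)) := by
      intro x hx
      have hx' : x ^ (r + 1) = ∑ p ∈ Finset.range (r + 1), ∑ k ∈ Finset.range (r + 1 - p),
          a p k * (starRingEnd ℂ) x ^ p * x ^ k := sub_eq_zero.mp (hsupp x hx)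
      have hpow : x ^ (n + 1) = x ^ (n - r) * x ^ (r + 1) := by
        rw [← pow_add]; congr 1; omega
      rw [hpow, hx']
      simp only [Finset.mul_sum]
      refine Finset.sum_congr rfl fun p hp => Finset.sum_congr rfl fun k hk => ?_
      have hnk : n + k - r = (n - r) + k := by omega
      rw [hnk, pow_add, pow_add]
      ring
    calc F i (n + 1) = ∑ x ∈ atoms, ∑ p ∈ Finset.range (r + 1),
          ∑ k ∈ Finset.range (r + 1 - p),
            a p k * ((c x : ℂ) * (starRingEnd ℂ) x ^ (p + i) * x ^ (n + k - r)) :=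
        Finset.sum_congr rfl key
      _ = _ := by
        rw [Finset.sum_comm]
        refine Finset.sum_congr rfl fun p hp => ?_
        rw [Finset.sum_comm]
        refine Finset.sum_congr rfl fun k hk => ?_
        rw [Finset.mul_sum]
  have main : ∀ s : ℕ, ∀ i j : ℕ, i + j = s → γ i j = F i j := by
    intro s
    induction s using Nat.strong_induction_on with
    | _ s IH =>
      have step : ∀ i j : ℕ, i + j = s → r < j → γ i j = F i j := by
        intro i j hs hj
        obtain ⟨n, rfl⟩ : ∃ n, j = n + 1 := ⟨j - 1, by omega⟩
        have hn : r ≤ n := by omega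
        rw [hrec i n hn, hFrec i n hn]
        refine Finset.sum_congr rfl fun p hp => Finset.sum_congr rfl fun k hk => ?_
        rw [Finset.mem_range] at hp
        rw [Finset.mem_range] at hk
        rw [IH ((p + i) + (n + k - r)) (by omega) (p + i) (n + k - r) rfl]
      intro i j hs
      rcases le_or_gt j r with hj | hj
      · rcases le_or_gt i r with hi | hi
        · exact hinit i j hi hj
        · calc γ i j = (starRingEnd ℂ) (γ j i) := by
                rw [hherm i j, Complex.conj_conj]
            _ = (starRingEnd ℂ) (F j i) := by rw [step j i (by omega) hi]
            _ = F i j := by rw [hFherm i j, Complex.conj_conj]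
      · exact step i j hs hj
  exact fun i j => main (i + j) i j rfl
end

section
/- Let μ be a positive measure on ℂ representing the full double sequence γ(i,j) = ∫ conj(z)^i z^j dμ, and suppose γ satisfies the recursion γ(i,n+1) = Σ_{0 ≤ l+k ≤ r} a_{lk} γ(l+i, n+k-r) for all i ≥ 0, n ≥ r. Then μ is supported in the zero set of P(z, z̄) = z^{r+1} - Σ a_{lk} z̄^l z^k. -/
open MeasureTheory Complex

/-- If `μ` represents the full doubly indexed sequence `γ` and `γ` satisfies the
recursion associated with `P(z, z̄) = z^{r+1} - ∑_{l+k ≤ r} a_{lk} z̄^l z^k`, then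
`μ` is supported in the zero set of `P`. -/
theorem representing_measure_supported_in_char_zero_set
    (μ : Measure ℂ) [IsFiniteMeasure μ] (γ : ℕ → ℕ → ℂ) (r : ℕ) (a : ℕ → ℕ → ℂ)
    (P : ℂ → ℂ)
    (hP : ∀ z, P z = z ^ (r + 1) -
      ∑ l ∈ Finset.range (r + 1), ∑ k ∈ Finset.range (r + 1 - l),
        a l k * (starRingEnd ℂ) z ^ l * z ^ k)
    (hint : ∀ i j : ℕ, Integrable (fun z : ℂ => (starRingEnd ℂ) z ^ i * z ^ j) μ)
    (hmom : ∀ i j : ℕ, γ i j = ∫ z, (starRingEnd ℂ) z ^ i * z ^ j ∂μ)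
    (hrec : ∀ i n : ℕ, r ≤ n →
      γ i (n + 1) = ∑ l ∈ Finset.range (r + 1), ∑ k ∈ Finset.range (r + 1 - l),
        a l k * γ (l + i) (n + k - r)) :
    (∫ z, ‖P z‖ ^ 2 ∂μ = 0) ∧ μ {z : ℂ | P z ≠ 0} = 0 := by
  -- expansion of z̄^i z^m P(z)
  have hexp : ∀ (i m : ℕ) (z : ℂ), (starRingEnd ℂ) z ^ i * z ^ m * P z
      = (starRingEnd ℂ) z ^ i * z ^ (m + (r + 1))
        - ∑ l ∈ Finset.range (r + 1), ∑ k ∈ Finset.range (r + 1 - l),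
            a l k * ((starRingEnd ℂ) z ^ (l + i) * z ^ (m + k)) := by
    intro i m z
    rw [hP z, mul_sub]
    congr 1
    · ring
    · rw [Finset.mul_sum]
      refine Finset.sum_congr rfl fun l _ => ?_
      rw [Finset.mul_sum]
      refine Finset.sum_congr rfl fun k _ => ?_
      ring
  -- integrability of the second summand
  have hsint : ∀ i m : ℕ, Integrable (fun z : ℂ =>
      ∑ l ∈ Finset.range (r + 1), ∑ k ∈ Finset.range (r + 1 - l),
        a l k * ((starRingEnd ℂ) z ^ (l + i) * z ^ (m + k))) μ := by
    intro i m
    refine integrable_finset_sum _ fun l _ => integrable_finset_sum _ fun k _ => ?_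
    exact (hint (l + i) (m + k)).const_mul _
  have hintP : ∀ i m : ℕ,
      Integrable (fun z : ℂ => (starRingEnd ℂ) z ^ i * z ^ m * P z) μ := by
    intro i m
    have := (hint i (m + (r + 1))).sub (hsint i m)
    exact this.congr (Filter.Eventually.of_forall fun z => (hexp i m z).symm)
  -- key orthogonality relations
  have key : ∀ i m : ℕ, ∫ z, (starRingEnd ℂ) z ^ i * z ^ m * P z ∂μ = 0 := by
    intro i m
    have heq : ∫ z, (starRingEnd ℂ) z ^ i * z ^ m * P z ∂μ
        = γ i (m + (r + 1)) - ∑ l ∈ Finset.range (r + 1),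
            ∑ k ∈ Finset.range (r + 1 - l), a l k * γ (l + i) (m + k) := by
      rw [hmom]
      calc ∫ z, (starRingEnd ℂ) z ^ i * z ^ m * P z ∂μ
          = ∫ z, ((starRingEnd ℂ) z ^ i * z ^ (m + (r + 1))
            - ∑ l ∈ Finset.range (r + 1), ∑ k ∈ Finset.range (r + 1 - l),
                a l k * ((starRingEnd ℂ) z ^ (l + i) * z ^ (m + k))) ∂μ := by
            exact integral_congr_ae (Filter.Eventually.of_forall fun z => hexp i m z)
        _ = _ := by
            rw [integral_sub (hint i (m + (r + 1))) (hsint i m),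
              integral_finset_sum _ fun l _ =>
                integrable_finset_sum _ fun k _ => (hint (l + i) (m + k)).const_mul _]
            congr 1
            refine Finset.sum_congr rfl fun l _ => ?_
            rw [integral_finset_sum _ fun k _ => (hint (l + i) (m + k)).const_mul _]
            refine Finset.sum_congr rfl fun k _ => ?_
            rw [integral_const_mul, ← hmom]
    rw [heq]
    have := hrec i (m + r) (Nat.le_add_left r m)
    have h2 : m + r + 1 = m + (r + 1) := by omega
    rw [h2] at this
    rw [this]
    rw [sub_eq_zero]
    refine Finset.sum_congr rfl fun l _ => Finset.sum_congr rfl fun k _ => ?_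
    congr 2
    omega
  -- conj(P z) * P z expansion
  have hconjexp : ∀ z : ℂ, (starRingEnd ℂ) (P z) * P z
      = (starRingEnd ℂ) z ^ (r + 1) * z ^ 0 * P z
        - ∑ l ∈ Finset.range (r + 1), ∑ k ∈ Finset.range (r + 1 - l),
            (starRingEnd ℂ) (a l k) * ((starRingEnd ℂ) z ^ k * z ^ l * P z) := by
    intro z
    have : (starRingEnd ℂ) (P z) = (starRingEnd ℂ) z ^ (r + 1)
        - ∑ l ∈ Finset.range (r + 1), ∑ k ∈ Finset.range (r + 1 - l),
            (starRingEnd ℂ) (a l k) * z ^ l * (starRingEnd ℂ) z ^ k := by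
      rw [hP]
      simp only [map_sub, map_pow, map_sum, map_mul, Complex.conj_conj]
    rw [this, sub_mul, Finset.sum_mul]
    congr 1
    · ring
    · refine Finset.sum_congr rfl fun l _ => ?_
      rw [Finset.sum_mul]
      refine Finset.sum_congr rfl fun k _ => ?_
      ring
  -- integrability of conj(P) * P
  have hsum2 : Integrable (fun z : ℂ =>
      ∑ l ∈ Finset.range (r + 1), ∑ k ∈ Finset.range (r + 1 - l),
        (starRingEnd ℂ) (a l k) * ((starRingEnd ℂ) z ^ k * z ^ l * P z)) μ := by
    refine integrable_finset_sum _ fun l _ => integrable_finset_sum _ fun k _ => ?_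
    exact (hintP k l).const_mul _
  have hintPP : Integrable (fun z : ℂ => (starRingEnd ℂ) (P z) * P z) μ := by
    have h1 := (hintP (r + 1) 0).sub hsum2
    exact h1.congr (Filter.Eventually.of_forall fun z => (hconjexp z).symm)
  -- integral of conj(P) * P is zero
  have hintegral : ∫ z, (starRingEnd ℂ) (P z) * P z ∂μ = 0 := by
    calc ∫ z, (starRingEnd ℂ) (P z) * P z ∂μ
        = ∫ z, ((starRingEnd ℂ) z ^ (r + 1) * z ^ 0 * P z
          - ∑ l ∈ Finset.range (r + 1), ∑ k ∈ Finset.range (r + 1 - l),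
              (starRingEnd ℂ) (a l k) * ((starRingEnd ℂ) z ^ k * z ^ l * P z)) ∂μ :=
          integral_congr_ae (Filter.Eventually.of_forall fun z => hconjexp z)
      _ = 0 := by
          rw [integral_sub (hintP (r + 1) 0) hsum2,
            integral_finset_sum _ fun l _ =>
              integrable_finset_sum _ fun k _ => (hintP k l).const_mul _]
          rw [key (r + 1) 0]
          rw [zero_sub, neg_eq_zero]
          refine Finset.sum_eq_zero fun l _ => ?_
          rw [integral_finset_sum _ fun k _ => (hintP k l).const_mul _]
          refine Finset.sum_eq_zero fun k _ => ?_
          rw [integral_const_mul, key k l, mul_zero]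
  -- the real integral
  have hnormsq : ∀ z : ℂ, (starRingEnd ℂ) (P z) * P z = ((‖P z‖ ^ 2 : ℝ) : ℂ) := by
    intro z
    rw [mul_comm, Complex.mul_conj']
    norm_cast
  have hptw : ∀ z : ℂ, RCLike.re ((starRingEnd ℂ) (P z) * P z) = ‖P z‖ ^ 2 := by
    intro z
    rw [hnormsq z]
    exact Complex.ofReal_re _
  have hre : ∫ z, ‖P z‖ ^ 2 ∂μ = 0 := by
    have h1 : ∫ z, ‖P z‖ ^ 2 ∂μ
        = ∫ z, RCLike.re ((starRingEnd ℂ) (P z) * P z) ∂μ :=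
      integral_congr_ae (Filter.Eventually.of_forall fun z => (hptw z).symm)
    rw [h1, integral_re hintPP, hintegral]
    simp
  refine ⟨hre, ?_⟩
  have hintn : Integrable (fun z : ℂ => ‖P z‖ ^ 2) μ := by
    have := hintPP.re
    refine this.congr (Filter.Eventually.of_forall fun z => ?_)
    exact hptw z
  have hae : (fun z : ℂ => ‖P z‖ ^ 2) =ᵐ[μ] 0 := by
    rw [← MeasureTheory.integral_eq_zero_iff_of_nonneg
      (fun z => sq_nonneg _) hintn]
    exact hre
  have : ∀ᵐ z ∂μ, P z = 0 := by
    filter_upwards [hae] with z hz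
    have : ‖P z‖ ^ 2 = 0 := hz
    have : ‖P z‖ = 0 := by
      nlinarith [norm_nonneg (P z)]
    exact norm_eq_zero.mp this
  simpa [ae_iff] using this
end

section
/- Let γ be a doubly indexed sequence whose moment bilinear form is positive semidefinite, and which admits an analytic characteristic polynomial P(z) = ∏_{i=1}^r (z - λ_i)^{n_i} ∈ ℂ[z] (i.e., the Riesz functional annihilates conj(z)^m z^n P(z) for all m, n). Then ∏_{i=1}^r (z - λ_i) (with all multiplicities reduced to 1) is also a characteristic polynomial of γ. In particular the minimal analytic characteristic polynomial has distinct roots. -/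
/-!
Positivity makes `(x, y) ↦ Λ (y * star x)` a semi-inner product on `ℂ[z̄, z]`, so by
Cauchy–Schwarz `Λ (x * x̄) = 0` forces `Λ (u * x̄) = 0` for every `u`. Hence the ideal of those `x`
with `Λ (u * x) = 0` for all `u`, i.e. of the characteristic polynomials, is stable under
conjugation and radical: if `x ^ 2` lies in it, then `Λ (y * ȳ) = Λ (x̄ ^ 2 * x ^ 2) = 0` for
`y = x * x̄`, so `y` lies in it, whence `Λ (x * x̄) = 0` and `x` lies in it. Since `∏ (z - λᵢ) ^ nᵢ`
divides `(∏ (z - λᵢ)) ^ maxᵢ nᵢ`, the squarefree product is characteristic as well.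
-/

open Polynomial Complex ComplexConjugate ComplexOrder

section PositiveFunctional

variable {R : Type*} [Ring R] [StarRing R] [Algebra ℂ R] [StarModule ℂ R] {L : R →ₗ[ℂ] ℂ}

theorem apply_mul_star_eq_zero_of_apply_mul_star_self_eq_zero
    (herm : ∀ x, L (star x) = conj (L x)) (pos : ∀ x, 0 ≤ L (x * star x))
    {x : R} (hx : L (x * star x) = 0) (u : R) : L (u * star x) = 0 := by
  let _ : PreInnerProductSpace.Core ℂ R :=
    { inner x y := L (y * star x)
      conj_inner_symm x y := by rw [← herm, star_mul, star_star]
      re_inner_nonneg x := (Complex.nonneg_iff.1 (pos x)).1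
      add_left x y z := by simp [star_add, mul_add]
      smul_left x y r := by simp [star_smul] }
  have h := InnerProductSpace.Core.inner_mul_inner_self_le (𝕜 := ℂ) x u
  change ‖L (u * star x)‖ * ‖L (x * star u)‖ ≤ (L (x * star x)).re * (L (u * star u)).re at h
  rw [hx, ← star_star x, ← star_mul, herm, star_star, norm_conj, zero_re, zero_mul] at h
  exact norm_eq_zero.1 (mul_self_eq_zero.1 (le_antisymm h (mul_self_nonneg _)))

end PositiveFunctional

section KerIdeal

variable {R : Type*} [CommRing R] [Algebra ℂ R]

def kerIdeal (L : R →ₗ[ℂ] ℂ) : Ideal R where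
  carrier := {x | ∀ u, L (u * x) = 0}
  add_mem' hx hy u := by simp [mul_add, hx u, hy u]
  zero_mem' u := by simp
  smul_mem' c x hx u := by simpa [mul_assoc] using hx (u * c)

theorem mem_kerIdeal {L : R →ₗ[ℂ] ℂ} {x : R} : x ∈ kerIdeal L ↔ ∀ u, L (u * x) = 0 := Iff.rfl

variable [StarRing R] {L : R →ₗ[ℂ] ℂ}

theorem star_mem_kerIdeal (herm : ∀ x, L (star x) = conj (L x)) {x : R}
    (hx : x ∈ kerIdeal L) : star x ∈ kerIdeal L := fun u => by
  rw [mul_comm, ← star_star u, ← star_mul, herm, hx, map_zero]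

variable [StarModule ℂ R]

theorem mem_kerIdeal_of_apply_mul_star_self_eq_zero (herm : ∀ x, L (star x) = conj (L x))
    (pos : ∀ x, 0 ≤ L (x * star x)) {x : R} (hx : L (x * star x) = 0) :
    x ∈ kerIdeal L := by
  simpa using star_mem_kerIdeal herm
    (apply_mul_star_eq_zero_of_apply_mul_star_self_eq_zero herm pos hx)

theorem kerIdeal_isRadical (herm : ∀ x, L (star x) = conj (L x))
    (pos : ∀ x, 0 ≤ L (x * star x)) : (kerIdeal L).IsRadical := by
  rw [Ideal.isRadical_iff_pow_one_lt 2 one_lt_two]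
  intro x hx
  have hxx : x * star x ∈ kerIdeal L := by
    refine mem_kerIdeal_of_apply_mul_star_self_eq_zero herm pos ?_
    rw [star_mul, star_star, show x * star x * (x * star x) = star x ^ 2 * x ^ 2 by ring]
    exact hx _
  exact mem_kerIdeal_of_apply_mul_star_self_eq_zero herm pos (by simpa using hxx 1)

end KerIdeal

theorem AddMonoidAlgebra.mem_kerIdeal_of_forall_single {M : Type*} [AddCommMonoid M]
    {L : AddMonoidAlgebra ℂ M →ₗ[ℂ] ℂ} {x : AddMonoidAlgebra ℂ M}
    (hx : ∀ m, L (single m 1 * x) = 0) : x ∈ kerIdeal L := by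
  refine mem_kerIdeal.2 fun u => ?_
  induction u using AddMonoidAlgebra.induction_linear with
  | zero => simp
  | add u v hu hv => rw [add_mul, map_add, hu, hv, add_zero]
  | single m c =>
    rw [← mul_one c, ← smul_single', smul_mul_assoc, map_smul, hx, smul_zero]

noncomputable section

namespace ComplexMoment

open AddMonoidAlgebra

/-- `single (i, j) c` stands for the monomial `c * z̄ ^ i * z ^ j`. -/
abbrev Poly := AddMonoidAlgebra ℂ (ℕ × ℕ)

def conjSwap : Poly →+* Poly :=
  (AddMonoidAlgebra.mapRingHom _ (starRingEnd ℂ)).comp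
    (mapDomainRingHom ℂ (AddEquiv.prodComm (M := ℕ) (N := ℕ)).toAddMonoidHom)

@[simp]
theorem conjSwap_single (p : ℕ × ℕ) (c : ℂ) : conjSwap (single p c) = single p.swap (conj c) := by
  simp [conjSwap]

scoped instance starRing : StarRing Poly where
  star := conjSwap
  star_involutive x := by
    induction x using AddMonoidAlgebra.induction_linear with
    | zero => simp
    | add x y hx hy => rw [map_add, map_add, hx, hy]
    | single p c => simp
  star_mul x y := by rw [map_mul, mul_comm]
  star_add := map_add conjSwap

scoped instance starModule : StarModule ℂ Poly where
  star_smul r x := by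
    change conjSwap _ = conj r • conjSwap x
    rw [Algebra.smul_def, map_mul, Algebra.smul_def]
    simp [conjSwap, AddMonoidAlgebra.coe_algebraMap]

def riesz (γ : ℕ → ℕ → ℂ) : Poly →ₗ[ℂ] ℂ :=
  Finsupp.linearCombination ℂ (fun p => γ p.1 p.2) ∘ₗ (coeffLinearEquiv ℂ).toLinearMap

variable {γ : ℕ → ℕ → ℂ}

@[simp]
theorem star_single (p : ℕ × ℕ) (c : ℂ) : star (single p c : Poly) = single p.swap (conj c) :=
  conjSwap_single p c

@[simp]
theorem riesz_single (p : ℕ × ℕ) (c : ℂ) : riesz γ (single p c) = c * γ p.1 p.2 := by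
  simp [riesz]

theorem riesz_star (hherm : ∀ i j, γ j i = conj (γ i j)) (x : Poly) :
    riesz γ (star x) = conj (riesz γ x) := by
  induction x using AddMonoidAlgebra.induction_linear with
  | zero => simp
  | add x y hx hy => rw [star_add, map_add, map_add, hx, hy, map_add]
  | single p c =>
    rw [star_single, riesz_single, riesz_single, Prod.fst_swap, Prod.snd_swap, hherm, map_mul]

theorem riesz_mul_star (x y : Poly) :
    riesz γ (x * star y) = ∑ p ∈ x.coeff.support, ∑ q ∈ y.coeff.support,
      x.coeff p * conj (y.coeff q) * γ (p.1 + q.2) (p.2 + q.1) := by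
  conv_lhs => rw [← sum_coeff_single x, ← sum_coeff_single y]
  simp only [Finsupp.sum, star_sum, star_single, Finset.sum_mul_sum, map_sum, single_mul_single,
    riesz_single, Prod.fst_add, Prod.snd_add, Prod.fst_swap, Prod.snd_swap]

theorem riesz_mul_star_self_nonneg
    (hpos : ∀ (s : Finset (ℕ × ℕ)) (a : ℕ × ℕ → ℂ),
      0 ≤ (∑ p ∈ s, ∑ q ∈ s, a p * conj (a q) * γ (p.1 + q.2) (p.2 + q.1)).re ∧
      (∑ p ∈ s, ∑ q ∈ s, a p * conj (a q) * γ (p.1 + q.2) (p.2 + q.1)).im = 0)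
    (x : Poly) : 0 ≤ riesz γ (x * star x) := by
  rw [riesz_mul_star, Complex.nonneg_iff]
  exact ⟨(hpos _ _).1, (hpos _ _).2.symm⟩

theorem riesz_single_mul_aeval (m s : ℕ) (P : ℂ[X]) :
    riesz γ (single (m, s) 1 * aeval (single (0, 1) 1 : Poly) P) =
      ∑ k ∈ P.support, P.coeff k * γ m (s + k) := by
  conv_lhs => rw [P.as_sum_support]
  simp [Finset.mul_sum, aeval_monomial, single_pow]

theorem kerIdeal_riesz_isRadical (hherm : ∀ i j, γ j i = conj (γ i j))
    (hpos : ∀ (s : Finset (ℕ × ℕ)) (a : ℕ × ℕ → ℂ),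
      0 ≤ (∑ p ∈ s, ∑ q ∈ s, a p * conj (a q) * γ (p.1 + q.2) (p.2 + q.1)).re ∧
      (∑ p ∈ s, ∑ q ∈ s, a p * conj (a q) * γ (p.1 + q.2) (p.2 + q.1)).im = 0) :
    (kerIdeal (riesz γ)).IsRadical :=
  kerIdeal_isRadical (riesz_star hherm) (riesz_mul_star_self_nonneg hpos)

variable (γ) in
def charPolyIdeal : Ideal ℂ[X] := (kerIdeal (riesz γ)).comap (aeval (single (0, 1) 1 : Poly))

theorem mem_charPolyIdeal {P : ℂ[X]} :
    P ∈ charPolyIdeal γ ↔ ∀ m s, ∑ k ∈ P.support, P.coeff k * γ m (s + k) = 0 := by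
  simp only [← riesz_single_mul_aeval]
  refine ⟨fun hP m s => hP _, fun hP => mem_kerIdeal_of_forall_single fun p => hP p.1 p.2⟩

end ComplexMoment

end

theorem minimal_char_poly_distinct_roots_general
    (γ : ℕ → ℕ → ℂ)
    (hherm : ∀ i j, γ j i = (starRingEnd ℂ) (γ i j))
    (hpos : ∀ (s : Finset (ℕ × ℕ)) (a : ℕ × ℕ → ℂ),
      0 ≤ (∑ p ∈ s, ∑ q ∈ s,
        a p * (starRingEnd ℂ) (a q) * γ (p.1 + q.2) (p.2 + q.1)).re ∧
      (∑ p ∈ s, ∑ q ∈ s,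
        a p * (starRingEnd ℂ) (a q) * γ (p.1 + q.2) (p.2 + q.1)).im = 0)
    (r : ℕ) (lam : Fin r → ℂ) (n : Fin r → ℕ)
    (hchar : ∀ m s : ℕ,
      ∑ k ∈ (∏ i, (X - C (lam i)) ^ n i : Polynomial ℂ).support,
        (∏ i, (X - C (lam i)) ^ n i : Polynomial ℂ).coeff k * γ m (s + k) = 0) :
    ∀ m s : ℕ,
      ∑ k ∈ (∏ i, (X - C (lam i)) : Polynomial ℂ).support,
        (∏ i, (X - C (lam i)) : Polynomial ℂ).coeff k * γ m (s + k) = 0 := by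
  have hdvd : ∏ i, (X - C (lam i)) ^ n i ∣ (∏ i, (X - C (lam i))) ^ Finset.univ.sup n := by
    rw [← Finset.prod_pow]
    exact Finset.prod_dvd_prod_of_dvd _ _ fun i _ =>
      pow_dvd_pow _ (Finset.le_sup (Finset.mem_univ i))
  have hpow := Ideal.mem_of_dvd _ hdvd (ComplexMoment.mem_charPolyIdeal.2 hchar)
  exact ComplexMoment.mem_charPolyIdeal.1
    ((ComplexMoment.kerIdeal_riesz_isRadical hherm hpos).comap _ ⟨_, hpow⟩)

/-- If the moment form of `γ` is positive semidefinite and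
`P(z) = ∏ (z - λᵢ)^{nᵢ}` is an analytic characteristic polynomial of `γ`
(i.e. the Riesz functional annihilates `z̄^m z^s P(z)` for all `m, s`), then the
squarefree polynomial `∏ (z - λᵢ)` is also a characteristic polynomial of `γ`. -/
theorem minimal_char_poly_distinct_roots
    (γ : ℕ → ℕ → ℂ)
    (hherm : ∀ i j, γ j i = (starRingEnd ℂ) (γ i j))
    (hpos : ∀ (s : Finset (ℕ × ℕ)) (a : ℕ × ℕ → ℂ),
      0 ≤ (∑ p ∈ s, ∑ q ∈ s,
        a p * (starRingEnd ℂ) (a q) * γ (p.1 + q.2) (p.2 + q.1)).re ∧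
      (∑ p ∈ s, ∑ q ∈ s,
        a p * (starRingEnd ℂ) (a q) * γ (p.1 + q.2) (p.2 + q.1)).im = 0)
    (r : ℕ) (lam : Fin r → ℂ) (n : Fin r → ℕ) (hn : ∀ i, 1 ≤ n i)
    (hchar : ∀ m s : ℕ,
      ∑ k ∈ (∏ i, (X - C (lam i)) ^ n i : Polynomial ℂ).support,
        (∏ i, (X - C (lam i)) ^ n i : Polynomial ℂ).coeff k * γ m (s + k) = 0) :
    ∀ m s : ℕ,
      ∑ k ∈ (∏ i, (X - C (lam i)) : Polynomial ℂ).support,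
        (∏ i, (X - C (lam i)) : Polynomial ℂ).coeff k * γ m (s + k) = 0 :=
  minimal_char_poly_distinct_roots_general γ hherm hpos r lam n hchar
end

section
/- Let a, b ∈ ℝ with b < -a < 2b, and suppose z ∈ ℂ satisfies z³ = -a·z - b·conj(z). Then the following identities hold for h(z) := conj(z)·z² - conj(z)²·z - b·z + b·conj(z): z²·h = (b-a)·h, z·conj(z)·h = (a-b)·h, and conj(h) = -h. -/
open Complex

/-- For `b < -a < 2b` and `z³ = -a·z - b·z̄`, the quantity
`h = z̄z² - z̄²z - bz + bz̄` satisfies `z²·h = (b-a)·h`, `z·z̄·h = (a-b)·h`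
and `conj h = -h`. -/
theorem cubic_relation_h_identities (a b : ℝ) (h1 : b < -a) (h2 : -a < 2 * b)
    (z : ℂ) (hz : z ^ 3 = -(a : ℂ) * z - (b : ℂ) * (starRingEnd ℂ) z) :
    z ^ 2 * ((starRingEnd ℂ) z * z ^ 2 - ((starRingEnd ℂ) z) ^ 2 * z - (b : ℂ) * z
        + (b : ℂ) * (starRingEnd ℂ) z) =
      ((b : ℂ) - (a : ℂ)) * ((starRingEnd ℂ) z * z ^ 2 - ((starRingEnd ℂ) z) ^ 2 * z
        - (b : ℂ) * z + (b : ℂ) * (starRingEnd ℂ) z) ∧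
    z * (starRingEnd ℂ) z * ((starRingEnd ℂ) z * z ^ 2 - ((starRingEnd ℂ) z) ^ 2 * z
        - (b : ℂ) * z + (b : ℂ) * (starRingEnd ℂ) z) =
      ((a : ℂ) - (b : ℂ)) * ((starRingEnd ℂ) z * z ^ 2 - ((starRingEnd ℂ) z) ^ 2 * z
        - (b : ℂ) * z + (b : ℂ) * (starRingEnd ℂ) z) ∧
    (starRingEnd ℂ) ((starRingEnd ℂ) z * z ^ 2 - ((starRingEnd ℂ) z) ^ 2 * z
        - (b : ℂ) * z + (b : ℂ) * (starRingEnd ℂ) z) =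
      -((starRingEnd ℂ) z * z ^ 2 - ((starRingEnd ℂ) z) ^ 2 * z - (b : ℂ) * z
        + (b : ℂ) * (starRingEnd ℂ) z) := by
  have hzc : ((starRingEnd ℂ) z) ^ 3 = -(a : ℂ) * (starRingEnd ℂ) z - (b : ℂ) * z := by
    have := congrArg (starRingEnd ℂ) hz
    simpa [map_sub, map_mul, map_pow, Complex.conj_conj] using this
  refine ⟨?_, ?_, ?_⟩
  · linear_combination ((starRingEnd ℂ) z * z - ((starRingEnd ℂ) z) ^ 2 - (b : ℂ)) * hz
      + (b : ℂ) * hzc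
  · linear_combination (((starRingEnd ℂ) z) ^ 2 + (b : ℂ)) * hz + (-(z ^ 2) - (b : ℂ)) * hzc
  · simp only [map_add, map_sub, map_mul, map_pow, Complex.conj_conj, Complex.conj_ofReal]
    ring
end

section
/- Let b > 0 and a ∈ ℝ with 2b ≤ a. Then the zero set of z³ + a·z + b·conj(z) in ℂ is exactly {0, i√(a-b), -i√(a-b)} (3 points). -/
open Complex

/-- For `b > 0` and `2b ≤ a`, the zero set of `z³ + a·z + b·z̄` is exactly
`{0, i√(a-b), -i√(a-b)}`. -/
theorem cubic_harmonic_zero_set_three (a b : ℝ) (hb : 0 < b) (hab : 2 * b ≤ a) :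
    {z : ℂ | z ^ 3 + (a : ℂ) * z + (b : ℂ) * (starRingEnd ℂ) z = 0} =
      ({0, Complex.I * (Real.sqrt (a - b) : ℂ),
        -(Complex.I * (Real.sqrt (a - b) : ℂ))} : Set ℂ) := by
  have hab' : (0:ℝ) ≤ a - b := by linarith
  set s := Real.sqrt (a - b) with hs_def
  have hs : s ^ 2 = a - b := Real.sq_sqrt hab'
  have hsC : (s : ℂ) ^ 2 = (a : ℂ) - (b : ℂ) := by
    rw [← Complex.ofReal_pow, hs]; push_cast; ring
  ext z
  simp only [Set.mem_setOf_eq, Set.mem_insert_iff, Set.mem_singleton_iff]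
  constructor
  · intro h
    have hre := congrArg Complex.re h
    have him := congrArg Complex.im h
    simp only [Complex.add_re, Complex.add_im, Complex.mul_re, Complex.mul_im,
      Complex.ofReal_re, Complex.ofReal_im, Complex.conj_re, Complex.conj_im,
      pow_succ, pow_zero, one_mul, Complex.one_re, Complex.one_im,
      Complex.zero_re, Complex.zero_im] at hre him
    ring_nf at hre him
    set x := z.re
    set y := z.im
    by_cases hx : x = 0
    · -- imaginary axis
      have him' : y * ((a - b) - y ^ 2) = 0 := by
        rw [hx] at him; nlinarith [him]
      rcases mul_eq_zero.mp him' with hy | hy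
      · left
        exact Complex.ext (by simpa using hx) (by simpa using hy)
      · have hy2 : y ^ 2 = s ^ 2 := by rw [hs]; linarith
        have : (y - s) * (y + s) = 0 := by ring_nf; nlinarith [hy2]
        rcases mul_eq_zero.mp this with hy' | hy'
        · right; left
          refine Complex.ext ?_ ?_
          · simpa using hx
          · simp only [Complex.mul_im, Complex.I_re, Complex.I_im,
              Complex.ofReal_re, Complex.ofReal_im]
            simp only [y] at hy' ⊢
            linarith
        · right; right
          refine Complex.ext ?_ ?_
          · simpa using hx
          · simp only [Complex.neg_im, Complex.mul_im, Complex.I_re, Complex.I_im,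
              Complex.ofReal_re, Complex.ofReal_im]
            simp only [y] at hy' ⊢
            linarith
    · exfalso
      have hx2 : 0 < x ^ 2 := by positivity
      have hfac : x ^ 2 - 3 * y ^ 2 + a + b = 0 := by
        have : x * (x ^ 2 - 3 * y ^ 2 + a + b) = 0 := by nlinarith [hre]
        rcases mul_eq_zero.mp this with h' | h'
        · exact absurd h' hx
        · exact h'
      by_cases hy : y = 0
      · rw [hy] at hfac; nlinarith
      · have hfac2 : 3 * x ^ 2 - y ^ 2 + a - b = 0 := by
          have : y * (3 * x ^ 2 - y ^ 2 + a - b) = 0 := by nlinarith [him]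
          rcases mul_eq_zero.mp this with h' | h'
          · exact absurd h' hy
          · exact h'
        nlinarith
  · intro h
    rcases h with h | h | h
    · subst h; simp
    · subst h
      have hc : (starRingEnd ℂ) (Complex.I * (s : ℂ)) = -Complex.I * (s : ℂ) := by
        simp [map_mul, Complex.conj_ofReal]
      rw [hc]
      linear_combination (-(Complex.I * (s:ℂ))) * hsC + Complex.I * (s:ℂ)^3 * Complex.I_sq
    · subst h
      have hc : (starRingEnd ℂ) (-(Complex.I * (s : ℂ))) = Complex.I * (s : ℂ) := by
        simp [map_mul, Complex.conj_ofReal]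
      rw [hc]
      linear_combination (Complex.I * (s:ℂ)) * hsC - Complex.I * (s:ℂ)^3 * Complex.I_sq
end

section
/- Let b < 0 and a ∈ ℝ with |a| < -b. Then the zero set of z³ + a·z + b·conj(z) in ℂ is exactly {0, i√(a-b), -i√(a-b), √(-a-b), -√(-a-b)} (5 points). -/
open Complex

/-- For `b < 0` and `|a| < -b`, the zero set of `z³ + a·z + b·z̄` is exactly
`{0, i√(a-b), -i√(a-b), √(-a-b), -√(-a-b)}`. -/
theorem cubic_harmonic_zero_set_five (a b : ℝ) (hb : b < 0) (hab : |a| < -b) :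
    {z : ℂ | z ^ 3 + (a : ℂ) * z + (b : ℂ) * (starRingEnd ℂ) z = 0} =
      ({0, Complex.I * (Real.sqrt (a - b) : ℂ),
        -(Complex.I * (Real.sqrt (a - b) : ℂ)),
        (Real.sqrt (-a - b) : ℂ), -(Real.sqrt (-a - b) : ℂ)} : Set ℂ) := by
  obtain ⟨ha1, ha2⟩ := abs_lt.1 hab
  have hab1 : (0:ℝ) < a - b := by linarith
  have hab2 : (0:ℝ) < -a - b := by linarith
  set s := Real.sqrt (a - b) with hs
  set t := Real.sqrt (-a - b) with ht
  have hs1 : s ^ 2 = a - b := Real.sq_sqrt hab1.le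
  have ht1 : t ^ 2 = -a - b := Real.sq_sqrt hab2.le
  ext z
  obtain ⟨x, y⟩ := z
  simp only [Set.mem_setOf_eq, Set.mem_insert_iff, Set.mem_singleton_iff,
    Complex.ext_iff, pow_succ, pow_zero, one_mul, Complex.mul_re, Complex.mul_im,
    Complex.add_re, Complex.add_im, Complex.neg_re, Complex.neg_im,
    Complex.ofReal_re, Complex.ofReal_im, Complex.I_re, Complex.I_im,
    Complex.zero_re, Complex.zero_im, Complex.conj_re, Complex.conj_im]
  ring_nf
  constructor
  · rintro ⟨hre, him⟩
    have h1 : x * (x ^ 2 - 3 * y ^ 2 + (a + b)) = 0 := by linear_combination hre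
    have h2 : y * (3 * x ^ 2 - y ^ 2 + (a - b)) = 0 := by linear_combination him
    rcases mul_eq_zero.mp h1 with hx | hx <;> rcases mul_eq_zero.mp h2 with hy | hy
    · exact Or.inl ⟨hx, hy⟩
    · have hy2 : (y - s) * (y + s) = 0 := by
        rw [hx] at hy; linear_combination -hy - hs1
      rcases mul_eq_zero.mp hy2 with h | h
      · exact Or.inr (Or.inl ⟨hx, by linarith⟩)
      · exact Or.inr (Or.inr (Or.inl ⟨hx, by linarith⟩))
    · have hx2 : (x - t) * (x + t) = 0 := by
        rw [hy] at hx; linear_combination hx - ht1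
      rcases mul_eq_zero.mp hx2 with h | h
      · exact Or.inr (Or.inr (Or.inr (Or.inl ⟨by linarith, hy⟩)))
      · exact Or.inr (Or.inr (Or.inr (Or.inr ⟨by linarith, hy⟩)))
    · exfalso
      have hy2 : y ^ 2 = (a + 2 * b) / 4 := by linarith
      nlinarith [sq_nonneg y]
  · rintro (⟨hx, hy⟩ | ⟨hx, hy⟩ | ⟨hx, hy⟩ | ⟨hx, hy⟩ | ⟨hx, hy⟩) <;>
      subst hx <;> subst hy <;> constructor <;> ring_nf <;>
      first
        | rfl
        | linear_combination (-s) * hs1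
        | linear_combination s * hs1
        | linear_combination (-t) * ht1
        | linear_combination t * ht1
end
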